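/- arXiv:1906.09966 — 2 statements merged into one kernel-verified Lean document; each statement's English description precedes it below -/
import Mathlib

section
/- Let 0 < α < 1 and let d be a metric on ℝ such that for all x < z < y: d(x,y) ≥ max{d(x,z) + α·d(z,y), α·d(x,z) + d(z,y)}. Then for any x < z < y with d(x,z) = d(z,y) (a 'harmonic' configuration with midpoint z), and any x < z' < y with d(x,z') = d(z',y), we have z = z'. That is, the metric midpoint in this sense is unique. -/
/-! Axiom M(α) makes `d x ·` and `d · y` strictly increasing along `(x, y)` with a gain of at
least `α * d a b` between `a < b`. Two midpoints `a < b` would therefore give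
`d x b ≥ d a y + α d(a,b) ≥ d x b + 2α d(a,b)`, forcing `d(a,b) = 0`. -/

theorem not_lt_of_harmonic {X : Type*} [LinearOrder X] {α : ℝ} {d : X → X → ℝ} (hα : 0 < α)
    (hM : ∀ x z y : X, x < z → z < y →
      d x y ≥ max (d x z + α * d z y) (α * d x z + d z y))
    {x y a b : X} (hxa : x < a) (hby : b < y) (hd : 0 < d a b)
    (ha : d x a = d a y) (hb : d x b = d b y) : ¬ a < b := by
  intro hab
  have hxb : d x a + α * d a b ≤ d x b := (le_max_left _ _).trans (hM x a b hxa hab)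
  have hay : α * d a b + d b y ≤ d a y := (le_max_right _ _).trans (hM a b y hab hby)
  linarith [mul_pos hα hd]

theorem stmt_11_general (α : ℝ) (hα : 0 < α) (d : ℝ → ℝ → ℝ)
    (hzero : ∀ x y, d x y = 0 ↔ x = y)
    (hnonneg : ∀ x y, 0 ≤ d x y)
    (hM : ∀ x z y : ℝ, x < z → z < y →
      d x y ≥ max (d x z + α * d z y) (α * d x z + d z y))
    (x y z z' : ℝ) (hxz : x < z) (hzy : z < y) (hxz' : x < z') (hz'y : z' < y)
    (hmid : d x z = d z y) (hmid' : d x z' = d z' y) :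
    z = z' := by
  by_contra hne
  have hpos : ∀ a b, a ≠ b → 0 < d a b := fun a b h =>
    (hnonneg a b).lt_of_ne fun h0 => h ((hzero a b).1 h0.symm)
  rcases lt_or_gt_of_ne hne with h | h
  · exact not_lt_of_harmonic hα hM hxz hz'y (hpos _ _ hne) hmid hmid' h
  · exact not_lt_of_harmonic hα hM hxz' hzy (hpos _ _ (Ne.symm hne)) hmid' hmid h

theorem stmt_11 (α : ℝ) (hα : 0 < α) (hα1 : α < 1) (d : ℝ → ℝ → ℝ)
    (hsymm : ∀ x y, d x y = d y x)
    (hzero : ∀ x y, d x y = 0 ↔ x = y)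
    (hnonneg : ∀ x y, 0 ≤ d x y)
    (htri : ∀ x y z, d x y ≤ d x z + d z y)
    (hM : ∀ x z y : ℝ, x < z → z < y →
      d x y ≥ max (d x z + α * d z y) (α * d x z + d z y))
    (x y z z' : ℝ) (hxz : x < z) (hzy : z < y) (hxz' : x < z') (hz'y : z' < y)
    (hmid : d x z = d z y) (hmid' : d x z' = d z' y) :
    z = z' :=
  stmt_11_general α hα d hzero hnonneg hM x y z z' hxz hzy hxz' hz'y hmid hmid'
end

section
/- Let 0 < α < 1 and let d be a metric on ℝ, continuous as a function of each variable with respect to the standard topology, unbounded on both ends (d(0,x) → ∞ as x → ±∞), satisfying the M(α) betweenness inequality: for x < z < y, d(x,y) ≥ max{d(x,z)+α·d(z,y), α·d(x,z)+d(z,y)}. Then for any x < z there exists a unique y > z with d(x,z) = d(z,y). -/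
/-!
For fixed `z`, the map `t ↦ d z t` is continuous, tends to `∞` (by the triangle inequality through
the base point `0`), and is strictly increasing on `(z, ∞)`, since `M(α)` gives
`d z b ≥ d z a + α d a b > d z a` for `z < a < b`. The intermediate value theorem produces `y`,
and strict monotonicity makes it unique.
-/

open Filter Set

section Betweenness

variable {X : Type*} {d : X → X → ℝ}

theorem pos_of_ne_of_eq_zero_iff (hzero : ∀ x y, d x y = 0 ↔ x = y)
    (hnonneg : ∀ x y, 0 ≤ d x y) {a b : X} (hab : a ≠ b) : 0 < d a b :=
  (hnonneg a b).lt_of_ne fun h => hab ((hzero a b).mp h.symm)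

theorem strictMonoOn_Ioi_of_betweenness [Preorder X] {α : ℝ} (hα : 0 < α)
    (hzero : ∀ x y, d x y = 0 ↔ x = y) (hnonneg : ∀ x y, 0 ≤ d x y)
    (hM : ∀ x z y : X, x < z → z < y → d x z + α * d z y ≤ d x y) (z : X) :
    StrictMonoOn (d z) (Ioi z) := fun a ha b _ hab =>
  calc d z a < d z a + α * d a b :=
        lt_add_of_pos_right _ (mul_pos hα (pos_of_ne_of_eq_zero_iff hzero hnonneg hab.ne))
    _ ≤ d z b := hM z a b ha hab

theorem tendsto_atTop_of_tendsto_atTop_basepoint [Preorder X]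
    (htri : ∀ x y z, d x y ≤ d x z + d z y) {o : X} (htop : Tendsto (d o) atTop atTop)
    (z : X) : Tendsto (d z) atTop atTop := by
  refine tendsto_atTop_mono (fun t => ?_) (tendsto_atTop_add_const_right _ (-d o z) htop)
  linarith [htri o t z]

end Betweenness

theorem stmt_12_general (α : ℝ) (hα : 0 < α) (d : ℝ → ℝ → ℝ)
    (hzero : ∀ x y, d x y = 0 ↔ x = y)
    (hnonneg : ∀ x y, 0 ≤ d x y)
    (htri : ∀ x y z, d x y ≤ d x z + d z y)
    (hcont : ∀ x : ℝ, Continuous (fun t => d x t))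
    (htop : Filter.Tendsto (fun t => d 0 t) Filter.atTop Filter.atTop)
    (hM : ∀ x z y : ℝ, x < z → z < y →
      d x y ≥ max (d x z + α * d z y) (α * d x z + d z y))
    (x z : ℝ) (hxz : x < z) :
    ∃! y : ℝ, z < y ∧ d x z = d z y := by
  have hmono : StrictMonoOn (d z) (Ioi z) :=
    strictMonoOn_Ioi_of_betweenness hα hzero hnonneg
      (fun x z y hxz hzy => (le_max_left _ _).trans (hM x z y hxz hzy)) z
  have hlt : d z z < d x z := by
    rw [(hzero z z).mpr rfl]
    exact pos_of_ne_of_eq_zero_iff hzero hnonneg hxz.ne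
  obtain ⟨y, hzy, hy⟩ := intermediate_value_Ioi (hcont z).continuousOn
    (tendsto_atTop_of_tendsto_atTop_basepoint htri htop z) hlt
  exact ⟨y, ⟨hzy, hy.symm⟩, fun y' ⟨hzy', hy'⟩ => hmono.injOn hzy' hzy (hy'.symm.trans hy.symm)⟩

theorem stmt_12 (α : ℝ) (hα : 0 < α) (hα1 : α < 1) (d : ℝ → ℝ → ℝ)
    (hsymm : ∀ x y, d x y = d y x)
    (hzero : ∀ x y, d x y = 0 ↔ x = y)
    (hnonneg : ∀ x y, 0 ≤ d x y)
    (htri : ∀ x y z, d x y ≤ d x z + d z y)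
    (hcont : ∀ x : ℝ, Continuous (fun t => d x t))
    (htop : Filter.Tendsto (fun t => d 0 t) Filter.atTop Filter.atTop)
    (hbot : Filter.Tendsto (fun t => d 0 t) Filter.atBot Filter.atTop)
    (hM : ∀ x z y : ℝ, x < z → z < y →
      d x y ≥ max (d x z + α * d z y) (α * d x z + d z y))
    (x z : ℝ) (hxz : x < z) :
    ∃! y : ℝ, z < y ∧ d x z = d z y :=
  stmt_12_general α hα d hzero hnonneg htri hcont htop hM x z hxz
end
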